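/- arXiv:1511.07535 — 5 statements merged into one kernel-verified Lean document; each statement's English description precedes it below -/
import Mathlib

section
/- A sequence f : ℕ → 𝕂 (𝕂 a field of characteristic zero) is k-regular if and only if there exist a positive integer d, matrices A_0, ..., A_{k-1} in 𝕂^{d×d}, and vectors v, w in 𝕂^d such that for every n with base-k expansion (n)_k = i_s ⋯ i_0, one has f(n) = wᵀ A_{i_0} ⋯ A_{i_s} v. -/
open Filter Matrix

noncomputable def mnorm {d : ℕ} (A : Matrix (Fin d) (Fin d) ℂ) : ℝ :=
  ‖Matrix.toEuclideanCLM (𝕜 := ℂ) (n := Fin d) A‖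

/-- The joint spectral radius of a finite family of matrices. -/
noncomputable def jsr {k d : ℕ} (A : Fin k → Matrix (Fin d) (Fin d) ℂ) : ℝ :=
  Filter.limsup (fun n : ℕ =>
    ⨆ w : Fin n → Fin k, mnorm (List.ofFn (fun j => A (w j))).prod ^ ((n : ℝ)⁻¹))
    Filter.atTop

/-- The spectral radius of a single matrix. -/
noncomputable def specRad {d : ℕ} (A : Matrix (Fin d) (Fin d) ℂ) : ℝ :=
  (spectralRadius ℂ A).toReal

/-- The k-kernel of a sequence. -/
def kKernel {K : Type*} (k : ℕ) (f : ℕ → K) : Set (ℕ → K) :=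
  {g | ∃ ℓ r : ℕ, r < k ^ ℓ ∧ g = fun n => f (k ^ ℓ * n + r)}

/-- A sequence is k-regular if the span of its k-kernel is finite dimensional. -/
def IsKRegular (K : Type*) [Field K] (k : ℕ) (f : ℕ → K) : Prop :=
  FiniteDimensional K (Submodule.span K (kKernel k f))

/-- The product A_{i_0} ⋯ A_{i_s} along the base-k digits (n)_k = i_s ⋯ i_0 of n. -/
def digProd {K : Type*} [Semiring K] {d k : ℕ} (A : Fin k → Matrix (Fin d) (Fin d) K)
    (n : ℕ) : Matrix (Fin d) (Fin d) K :=
  ((Nat.digits k n).map (fun i => if h : i < k then A ⟨i, h⟩ else 1)).prod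

/-!
The span of the k-kernel of f is stable under the shifts g ↦ (n ↦ g (k n + j)), j < k. If it is
finite dimensional with basis (bᵢ), the matrices A_j of these shifts act on the vectors
V n = (bᵢ n)ᵢ by V (k n + j) = A_j V n, so V n = A_{i₀} ⋯ A_{i_s} V 0, and f, a combination of
the bᵢ, is n ↦ wᵀ V n.

Conversely, for r < k^ℓ and n ≠ 0 the digits of k^ℓ n + r are those of r, padded with zeros to
length ℓ, followed by those of n; hence f (k^ℓ n + r) = uᵀ A_{(n)_k} v for some u. Every kernel
element therefore lies in the span of the d sequences n ↦ (A_{(n)_k} v)ᵢ together with the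
indicator of 0, which repairs the value at n = 0, where the padding is lost.
-/

section DigProd

variable {K : Type*} [Semiring K] {d k : ℕ}

lemma digProd_zero (A : Fin k → Matrix (Fin d) (Fin d) K) : digProd A 0 = 1 := by
  simp [digProd]

lemma digProd_mul_add (hk : 1 < k) (A : Fin k → Matrix (Fin d) (Fin d) K) {j : ℕ} (hj : j < k)
    {m : ℕ} (hjm : k * m + j ≠ 0) : digProd A (k * m + j) = A ⟨j, hj⟩ * digProd A m := by
  have hjm' : j ≠ 0 ∨ m ≠ 0 := by contrapose! hjm; simp [hjm]
  rw [digProd, add_comm, Nat.digits_add k hk j m hj hjm', List.map_cons, List.prod_cons,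
    dif_pos hj, digProd]

lemma exists_digProd_pow_mul_add (hk : 1 < k) (A : Fin k → Matrix (Fin d) (Fin d) K) :
    ∀ ℓ r : ℕ, r < k ^ ℓ → ∃ P, ∀ n ≠ 0, digProd A (k ^ ℓ * n + r) = P * digProd A n
  | 0, r, hr => ⟨1, fun n _ => by simp_all⟩
  | ℓ + 1, r, hr => by
    have hrk : r / k < k ^ ℓ := by
      rw [Nat.div_lt_iff_lt_mul (by omega), ← pow_succ]; exact hr
    obtain ⟨P, hP⟩ := exists_digProd_pow_mul_add hk A ℓ (r / k) hrk
    refine ⟨A ⟨r % k, Nat.mod_lt r (by omega)⟩ * P, fun n hn => ?_⟩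
    have hsplit : k ^ (ℓ + 1) * n + r = k * (k ^ ℓ * n + r / k) + r % k := by
      conv_lhs => rw [← Nat.div_add_mod r k]
      ring
    rw [hsplit, digProd_mul_add hk A _ (by positivity), hP n hn, mul_assoc]

lemma eq_digProd_mulVec_of_mul_add (hk : 1 < k) {A : Fin k → Matrix (Fin d) (Fin d) K}
    {V : ℕ → Fin d → K} (hV : ∀ m j (hj : j < k), V (k * m + j) = A ⟨j, hj⟩ *ᵥ V m) (n : ℕ) :
    V n = digProd A n *ᵥ V 0 := by
  induction n using Nat.strong_induction_on with
  | _ n ih =>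
    rcases eq_or_ne n 0 with rfl | hn
    · rw [digProd_zero, one_mulVec]
    · have hnk := Nat.mod_lt n (by omega : 0 < k)
      have hlt := Nat.div_lt_self (Nat.pos_of_ne_zero hn) hk
      rw [← Nat.div_add_mod n k] at hn ⊢
      rw [hV _ _ hnk, ih _ hlt, digProd_mul_add hk A hnk hn, mulVec_mulVec]

end DigProd

section Forward

variable {K : Type*} [Field K] {k : ℕ}

lemma funLeft_mul_add_mem_kKernel {f g : ℕ → K} (hg : g ∈ kKernel k f) {j : ℕ} (hj : j < k) :
    LinearMap.funLeft K K (fun n => k * n + j) g ∈ kKernel k f := by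
  obtain ⟨ℓ, r, hr, rfl⟩ := hg
  refine ⟨ℓ + 1, k ^ ℓ * j + r, ?_, funext fun n => ?_⟩
  · calc k ^ ℓ * j + r < k ^ ℓ * (j + 1) := by rw [mul_add_one]; omega
      _ ≤ k ^ (ℓ + 1) := by rw [pow_succ]; exact Nat.mul_le_mul_left _ hj
  · simp only [LinearMap.funLeft_apply]
    ring_nf

lemma funLeft_mul_add_mem_span_kKernel {f g : ℕ → K} (hg : g ∈ Submodule.span K (kKernel k f))
    {j : ℕ} (hj : j < k) :
    LinearMap.funLeft K K (fun n => k * n + j) g ∈ Submodule.span K (kKernel k f) :=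
  (Submodule.map_span_le _ _ _).mpr
    (fun _ h => Submodule.subset_span (funLeft_mul_add_mem_kKernel h hj))
    (Submodule.mem_map_of_mem hg)

lemma Module.Basis.coe_apply_eq_repr_dotProduct {ι : Type*} [Fintype ι]
    {S : Submodule K (ℕ → K)} (b : Module.Basis ι K S) (x : S) (n : ℕ) :
    (x : ℕ → K) n = b.repr x ⬝ᵥ fun i => (b i : ℕ → K) n := by
  conv_lhs => rw [← b.sum_repr x]
  simp only [Submodule.coe_sum, Submodule.coe_smul, Finset.sum_apply, Pi.smul_apply,
    smul_eq_mul, dotProduct]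

theorem exists_linRep_of_finiteDimensional (hk : 1 < k) {f : ℕ → K} {S : Submodule K (ℕ → K)}
    [FiniteDimensional K S] (hfS : f ∈ S)
    (hS : ∀ j < k, ∀ g ∈ S, LinearMap.funLeft K K (fun n => k * n + j) g ∈ S) :
    ∃ A : Fin k → Matrix (Fin (Module.finrank K S)) (Fin (Module.finrank K S)) K,
      ∃ v w, ∀ n, f n = w ⬝ᵥ digProd A n *ᵥ v := by
  let b := Module.finBasis K S
  let T (j : Fin k) : S →ₗ[K] S :=
    (LinearMap.funLeft K K (fun n => k * n + j)).restrict (hS j j.2)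
  let A (j : Fin k) := Matrix.of fun i i' => b.repr (T j (b i)) i'
  let V (n : ℕ) (i : Fin (Module.finrank K S)) := (b i : ℕ → K) n
  have hV : ∀ m j (hj : j < k), V (k * m + j) = A ⟨j, hj⟩ *ᵥ V m := fun m j hj =>
    funext fun i => b.coe_apply_eq_repr_dotProduct (T ⟨j, hj⟩ (b i)) m
  refine ⟨A, V 0, b.repr ⟨f, hfS⟩, fun n => ?_⟩
  rw [← eq_digProd_mulVec_of_mul_add hk hV n]
  exact b.coe_apply_eq_repr_dotProduct ⟨f, hfS⟩ n

theorem exists_linRep_of_isKRegular (hk : 1 < k) {f : ℕ → K} (hf : IsKRegular K k f) :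
    ∃ d : ℕ, 0 < d ∧ ∃ A : Fin k → Matrix (Fin d) (Fin d) K, ∃ v w : Fin d → K,
      ∀ n : ℕ, f n = w ⬝ᵥ digProd A n *ᵥ v := by
  rcases eq_or_ne f 0 with rfl | hf0
  · exact ⟨1, one_pos, 1, 0, 0, by simp⟩
  have : FiniteDimensional K (Submodule.span K (kKernel k f)) := hf
  have hfS : f ∈ Submodule.span K (kKernel k f) :=
    Submodule.subset_span ⟨0, 0, one_pos, by simp⟩
  refine ⟨_, Module.finrank_pos_iff_exists_ne_zero.mpr ⟨⟨f, hfS⟩, by simpa using hf0⟩,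
    exists_linRep_of_finiteDimensional hk hfS fun j hj g hg =>
      funLeft_mul_add_mem_span_kKernel hg hj⟩

end Forward

section Reverse

variable {K : Type*} [Field K] {d k : ℕ}

theorem isKRegular_of_linRep (hk : 1 < k) (A : Fin k → Matrix (Fin d) (Fin d) K)
    (v w : Fin d → K) : IsKRegular K k (fun n => w ⬝ᵥ digProd A n *ᵥ v) := by
  let L : (Fin d → K) →ₗ[K] (ℕ → K) :=
    LinearMap.pi fun n => (dotProductBilin K K).flip (digProd A n *ᵥ v)
  have hL : ∀ u n, L u n = u ⬝ᵥ digProd A n *ᵥ v := fun _ _ => rfl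
  suffices kKernel k (fun n => w ⬝ᵥ digProd A n *ᵥ v) ⊆
      (LinearMap.range L ⊔ K ∙ Pi.single (0 : ℕ) (1 : K) : Submodule K (ℕ → K)) from
    Submodule.finiteDimensional_of_le (Submodule.span_le.mpr this)
  rintro _ ⟨ℓ, r, hr, rfl⟩
  obtain ⟨P, hP⟩ := exists_digProd_pow_mul_add hk A ℓ r hr
  set g := fun n => w ⬝ᵥ digProd A (k ^ ℓ * n + r) *ᵥ v
  have hg : g = L (w ᵥ* P) + (g 0 - L (w ᵥ* P) 0) • Pi.single 0 1 := by
    funext n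
    rcases eq_or_ne n 0 with rfl | hn
    · simp
    · simp [g, hL, hP n hn, hn, dotProduct_mulVec, vecMul_vecMul]
  rw [hg]
  exact Submodule.add_mem_sup (LinearMap.mem_range_self L _)
    (Submodule.smul_mem _ _ (Submodule.mem_span_singleton_self _))

end Reverse

theorem stmt0_general {K : Type*} [Field K] {k : ℕ} (hk : 2 ≤ k) (f : ℕ → K) :
    IsKRegular K k f ↔
      ∃ d : ℕ, 0 < d ∧ ∃ A : Fin k → Matrix (Fin d) (Fin d) K, ∃ v w : Fin d → K,
        ∀ n : ℕ, f n = dotProduct w ((digProd A n).mulVec v) := by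
  refine ⟨exists_linRep_of_isKRegular hk, ?_⟩
  rintro ⟨d, -, A, v, w, hf⟩
  obtain rfl : f = _ := funext hf
  exact isKRegular_of_linRep hk A v w

/-- a sequence is k-regular iff it admits a linear representation
    f(n) = wᵀ A_{i_0} ⋯ A_{i_s} v along the base-k digits of n. -/
theorem stmt0 {K : Type*} [Field K] [CharZero K] {k : ℕ} (hk : 2 ≤ k) (f : ℕ → K) :
    IsKRegular K k f ↔
      ∃ d : ℕ, 0 < d ∧ ∃ A : Fin k → Matrix (Fin d) (Fin d) K, ∃ v w : Fin d → K,
        ∀ n : ℕ, f n = dotProduct w ((digProd A n).mulVec v) :=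
  stmt0_general hk f
end

section
/- For any finite set 𝒜 = {A_0, ..., A_{k-1}} of d×d matrices over ℝ (or ℂ) and any ε > 0, there exists a submultiplicative matrix norm ‖·‖ such that ‖A_i‖ < ρ(𝒜) + ε for every i ∈ {0, ..., k-1}, where ρ(𝒜) is the joint spectral radius of 𝒜. -/
set_option linter.unusedSectionVars false
set_option linter.unusedVariables false
set_option linter.deprecated false


open Filter Matrix

namespace JSRAux

noncomputable def TT {d : ℕ} (B : Matrix (Fin d) (Fin d) ℂ) :
    EuclideanSpace ℂ (Fin d) →L[ℂ] EuclideanSpace ℂ (Fin d) :=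
  Matrix.toEuclideanCLM (𝕜 := ℂ) B

variable {k d : ℕ}

lemma mnorm_eq (B : Matrix (Fin d) (Fin d) ℂ) : mnorm B = ‖TT B‖ := rfl

lemma mnorm_nonneg (B : Matrix (Fin d) (Fin d) ℂ) : 0 ≤ mnorm B := norm_nonneg _

lemma TT_mul (B C : Matrix (Fin d) (Fin d) ℂ) (x : EuclideanSpace ℂ (Fin d)) :
    TT (B * C) x = TT B (TT C x) := by
  show (Matrix.toEuclideanCLM (𝕜 := ℂ) (B * C)) x = _
  rw [_root_.map_mul]; rfl

lemma TT_smul (c : ℂ) (B : Matrix (Fin d) (Fin d) ℂ) : TT (c • B) = c • TT B :=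
  map_smul _ c B

lemma TT_add (B C : Matrix (Fin d) (Fin d) ℂ) : TT (B + C) = TT B + TT C :=
  map_add _ B C

lemma TT_inj {B : Matrix (Fin d) (Fin d) ℂ} (h : TT B = 0) : B = 0 := by
  have := (Matrix.toEuclideanCLM (𝕜 := ℂ) (n := Fin d)).injective (a₁ := B) (a₂ := 0)
  simp only [map_zero] at this; exact this h

lemma TT_zero : TT (0 : Matrix (Fin d) (Fin d) ℂ) = 0 := map_zero _

lemma mnorm_mul_le (B C : Matrix (Fin d) (Fin d) ℂ) : mnorm (B * C) ≤ mnorm B * mnorm C := by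
  show ‖Matrix.toEuclideanCLM (𝕜 := ℂ) (B * C)‖ ≤ _
  rw [_root_.map_mul]; exact norm_mul_le _ _

lemma mnorm_one_le : mnorm (1 : Matrix (Fin d) (Fin d) ℂ) ≤ 1 := by
  show ‖Matrix.toEuclideanCLM (𝕜 := ℂ) (1 : Matrix (Fin d) (Fin d) ℂ)‖ ≤ 1
  rw [_root_.map_one]
  exact ContinuousLinearMap.norm_id_le

/-- product of matrices along a word -/
noncomputable def PP (A : Fin k → Matrix (Fin d) (Fin d) ℂ) {n : ℕ} (w : Fin n → Fin k) :
    Matrix (Fin d) (Fin d) ℂ :=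
  (List.ofFn fun j => A (w j)).prod

instance : Nonempty (Fin 0 → Fin k) := ⟨fun j => j.elim0⟩

lemma PP_zero (A : Fin k → Matrix (Fin d) (Fin d) ℂ) (w : Fin 0 → Fin k) : PP A w = 1 := by
  simp [PP]

lemma PP_succ (A : Fin k → Matrix (Fin d) (Fin d) ℂ) {n : ℕ} (w : Fin (n + 1) → Fin k) :
    PP A w = A (w 0) * PP A (fun j => w j.succ) := by
  simp [PP, List.ofFn_succ]

lemma PP_snoc (A : Fin k → Matrix (Fin d) (Fin d) ℂ) {n : ℕ} (w : Fin n → Fin k) (i : Fin k) :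
    PP A (Fin.snoc w i) = PP A w * A i := by
  unfold PP
  rw [List.ofFn_succ']
  simp [Fin.snoc_castSucc, Fin.snoc_last]

lemma mnorm_PP_le (A : Fin k → Matrix (Fin d) (Fin d) ℂ) {C : ℝ}
    (hC : ∀ i, mnorm (A i) ≤ C) : ∀ {n : ℕ} (w : Fin n → Fin k), mnorm (PP A w) ≤ C ^ n := by
  intro n
  induction n with
  | zero => intro w; rw [PP_zero]; simpa using mnorm_one_le
  | succ n ih =>
    intro w
    have hC0 : 0 ≤ C := le_trans (mnorm_nonneg _) (hC (w 0))
    calc mnorm (PP A w) = mnorm (A (w 0) * PP A fun j => w j.succ) := by rw [PP_succ]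
      _ ≤ mnorm (A (w 0)) * mnorm (PP A fun j => w j.succ) := mnorm_mul_le _ _
      _ ≤ C * C ^ n := by
          exact mul_le_mul (hC _) (ih _) (mnorm_nonneg _) hC0
      _ = C ^ (n + 1) := (pow_succ' C n).symm


noncomputable def inn (A : Fin k → Matrix (Fin d) (Fin d) ℂ) (m : ℕ)
    (x : EuclideanSpace ℂ (Fin d)) : ℝ :=
  ⨆ w : Fin m → Fin k, ‖TT (PP A w) x‖

noncomputable def nu (A : Fin k → Matrix (Fin d) (Fin d) ℂ) (r : ℝ)
    (x : EuclideanSpace ℂ (Fin d)) : ℝ :=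
  ⨆ m : ℕ, (r⁻¹) ^ m * inn A m x

section Nu

variable (A : Fin k → Matrix (Fin d) (Fin d) ℂ) {r K : ℝ} (hr : 0 < r) (hK1 : 1 ≤ K)
  (hK : ∀ (m : ℕ) (w : Fin m → Fin k), (r⁻¹) ^ m * mnorm (PP A w) ≤ K)
  (x y : EuclideanSpace ℂ (Fin d))

lemma inn_bdd (m : ℕ) : BddAbove (Set.range fun w : Fin m → Fin k => ‖TT (PP A w) x‖) :=
  (Set.finite_range _).bddAbove

lemma inn_nonneg (m : ℕ) : 0 ≤ inn A m x := Real.iSup_nonneg fun _ => norm_nonneg _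

lemma le_inn (m : ℕ) (w : Fin m → Fin k) : ‖TT (PP A w) x‖ ≤ inn A m x :=
  le_ciSup (inn_bdd A x m) w

include hr hK1 hK

lemma term_le (m : ℕ) : (r⁻¹) ^ m * inn A m x ≤ K * ‖x‖ := by
  rw [inn, Real.mul_iSup_of_nonneg (by positivity)]
  refine Real.iSup_le (fun w => ?_) (by positivity)
  calc (r⁻¹) ^ m * ‖TT (PP A w) x‖ ≤ (r⁻¹) ^ m * (mnorm (PP A w) * ‖x‖) := by
        have := (TT (PP A w)).le_opNorm x
        rw [mnorm_eq]
        exact mul_le_mul_of_nonneg_left this (by positivity)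
    _ = ((r⁻¹) ^ m * mnorm (PP A w)) * ‖x‖ := by ring
    _ ≤ K * ‖x‖ := mul_le_mul_of_nonneg_right (hK m w) (norm_nonneg _)

lemma nu_bdd : BddAbove (Set.range fun m : ℕ => (r⁻¹) ^ m * inn A m x) := by
  refine ⟨K * ‖x‖, Set.forall_mem_range.2 fun m => term_le A hr hK1 hK x m⟩

lemma nu_nonneg : 0 ≤ nu A r x :=
  Real.iSup_nonneg fun m => mul_nonneg (by positivity) (inn_nonneg A x m)

lemma nu_le : nu A r x ≤ K * ‖x‖ :=
  Real.iSup_le (fun m => term_le A hr hK1 hK x m) (by positivity)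

lemma term_le_nu (m : ℕ) : (r⁻¹) ^ m * inn A m x ≤ nu A r x :=
  le_ciSup (nu_bdd A hr hK1 hK x) m

lemma norm_le_nu : ‖x‖ ≤ nu A r x := by
  have h0 : inn A 0 x = ‖x‖ := by
    unfold inn
    have : ∀ w : Fin 0 → Fin k, ‖TT (PP A w) x‖ = ‖x‖ := by
      intro w; rw [PP_zero]
      congr 1
      show (Matrix.toEuclideanCLM (𝕜 := ℂ) (1 : Matrix (Fin d) (Fin d) ℂ)) x = x
      rw [_root_.map_one]; rfl
    simp only [this]
    exact ciSup_const
  have := term_le_nu A hr hK1 hK x 0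
  rwa [pow_zero, one_mul, h0] at this

lemma nu_zero : nu A r (0 : EuclideanSpace ℂ (Fin d)) = 0 := by
  refine le_antisymm ?_ (nu_nonneg A hr hK1 hK 0)
  have := nu_le A hr hK1 hK (0 : EuclideanSpace ℂ (Fin d))
  simpa using this

lemma nu_smul (c : ℂ) : nu A r (c • x) = ‖c‖ * nu A r x := by
  unfold nu
  rw [Real.mul_iSup_of_nonneg (norm_nonneg c)]
  congr 1; funext m
  have hinn : inn A m (c • x) = ‖c‖ * inn A m x := by
    unfold inn
    rw [Real.mul_iSup_of_nonneg (norm_nonneg c)]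
    congr 1; funext w
    rw [(TT (PP A w)).map_smul, norm_smul]
  rw [hinn]; ring

lemma nu_add : nu A r (x + y) ≤ nu A r x + nu A r y := by
  refine Real.iSup_le (fun m => ?_)
    (add_nonneg (nu_nonneg A hr hK1 hK x) (nu_nonneg A hr hK1 hK y))
  have hinn : inn A m (x + y) ≤ inn A m x + inn A m y := by
    refine Real.iSup_le (fun w => ?_) (add_nonneg (inn_nonneg A x m) (inn_nonneg A y m))
    calc ‖TT (PP A w) (x + y)‖ ≤ ‖TT (PP A w) x‖ + ‖TT (PP A w) y‖ := by
          rw [(TT (PP A w)).map_add]; exact norm_add_le _ _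
      _ ≤ inn A m x + inn A m y := add_le_add (le_inn A x m w) (le_inn A y m w)
  calc (r⁻¹) ^ m * inn A m (x + y) ≤ (r⁻¹) ^ m * (inn A m x + inn A m y) :=
        mul_le_mul_of_nonneg_left hinn (by positivity)
    _ = (r⁻¹) ^ m * inn A m x + (r⁻¹) ^ m * inn A m y := by ring
    _ ≤ nu A r x + nu A r y :=
        add_le_add (term_le_nu A hr hK1 hK x m) (term_le_nu A hr hK1 hK y m)

lemma nu_Ai (i : Fin k) : nu A r (TT (A i) x) ≤ r * nu A r x := by
  refine Real.iSup_le (fun m => ?_) (mul_nonneg hr.le (nu_nonneg A hr hK1 hK x))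
  have hinn : inn A m (TT (A i) x) ≤ inn A (m + 1) x := by
    refine Real.iSup_le (fun w => ?_) (inn_nonneg A x (m + 1))
    calc ‖TT (PP A w) (TT (A i) x)‖ = ‖TT (PP A (Fin.snoc w i)) x‖ := by
          rw [← TT_mul, ← PP_snoc]
      _ ≤ inn A (m + 1) x := le_inn A x (m + 1) _
  calc (r⁻¹) ^ m * inn A m (TT (A i) x) ≤ (r⁻¹) ^ m * inn A (m + 1) x :=
        mul_le_mul_of_nonneg_left hinn (by positivity)
    _ = r * ((r⁻¹) ^ (m + 1) * inn A (m + 1) x) := by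
        rw [pow_succ, show r * ((r⁻¹) ^ m * r⁻¹ * inn A (m + 1) x)
            = (r * r⁻¹) * ((r⁻¹) ^ m * inn A (m + 1) x) by ring,
          mul_inv_cancel₀ hr.ne', one_mul]
    _ ≤ r * nu A r x :=
        mul_le_mul_of_nonneg_left (term_le_nu A hr hK1 hK x (m + 1)) hr.le

end Nu

noncomputable def NN (A : Fin k → Matrix (Fin d) (Fin d) ℂ) (r : ℝ)
    (B : Matrix (Fin d) (Fin d) ℂ) : ℝ :=
  ⨆ x : EuclideanSpace ℂ (Fin d), nu A r (TT B x) / nu A r x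

section NNSec

variable (A : Fin k → Matrix (Fin d) (Fin d) ℂ) {r K : ℝ} (hr : 0 < r) (hK1 : 1 ≤ K)
  (hK : ∀ (m : ℕ) (w : Fin m → Fin k), (r⁻¹) ^ m * mnorm (PP A w) ≤ K)
  (B C : Matrix (Fin d) (Fin d) ℂ)

include hr hK1 hK

lemma div_bound {c : ℝ} (hc : 0 ≤ c) (x : EuclideanSpace ℂ (Fin d))
    (h : nu A r (TT B x) ≤ c * nu A r x) : nu A r (TT B x) / nu A r x ≤ c := by
  rcases eq_or_lt_of_le (nu_nonneg A hr hK1 hK x) with h0 | h0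
  · rw [← h0, div_zero]; exact hc
  · exact (div_le_iff₀ h0).2 h

lemma NN_term_bound (x : EuclideanSpace ℂ (Fin d)) :
    nu A r (TT B x) / nu A r x ≤ K * mnorm B := by
  have hK0 : 0 ≤ K := le_trans zero_le_one hK1
  refine div_bound A hr hK1 hK B (mul_nonneg hK0 (mnorm_nonneg B)) x ?_
  calc nu A r (TT B x) ≤ K * ‖TT B x‖ := nu_le A hr hK1 hK _
    _ ≤ K * (mnorm B * ‖x‖) := by
        refine mul_le_mul_of_nonneg_left ?_ hK0
        rw [mnorm_eq]; exact (TT B).le_opNorm x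
    _ = (K * mnorm B) * ‖x‖ := by ring
    _ ≤ (K * mnorm B) * nu A r x :=
        mul_le_mul_of_nonneg_left (norm_le_nu A hr hK1 hK x)
          (mul_nonneg hK0 (mnorm_nonneg B))

lemma NN_bdd : BddAbove (Set.range fun x : EuclideanSpace ℂ (Fin d) =>
    nu A r (TT B x) / nu A r x) :=
  ⟨K * mnorm B, Set.forall_mem_range.2 fun x => NN_term_bound A hr hK1 hK B x⟩

lemma le_NN (x : EuclideanSpace ℂ (Fin d)) : nu A r (TT B x) / nu A r x ≤ NN A r B :=
  le_ciSup (NN_bdd A hr hK1 hK B) x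

lemma NN_nonneg : 0 ≤ NN A r B :=
  Real.iSup_nonneg fun x => div_nonneg (nu_nonneg A hr hK1 hK _) (nu_nonneg A hr hK1 hK _)

lemma opnu (x : EuclideanSpace ℂ (Fin d)) : nu A r (TT B x) ≤ NN A r B * nu A r x := by
  rcases eq_or_lt_of_le (nu_nonneg A hr hK1 hK x) with h0 | h0
  · have hx : x = 0 := by
      have h1 := norm_le_nu A hr hK1 hK x
      have : ‖x‖ ≤ 0 := by linarith [h0.symm ▸ h1]
      simpa using le_antisymm this (norm_nonneg x)
    subst hx
    rw [(TT B).map_zero, nu_zero A hr hK1 hK]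
    simp [NN_nonneg A hr hK1 hK B]
  · exact (div_le_iff₀ h0).1 (le_NN A hr hK1 hK B x)

lemma NN_zero_iff : NN A r B = 0 ↔ B = 0 := by
  constructor
  · intro h
    by_contra hB
    have hTB : TT B ≠ 0 := fun hT => hB (TT_inj hT)
    have : ∃ x, TT B x ≠ 0 := by
      by_contra hx
      push_neg at hx
      exact hTB (ContinuousLinearMap.ext fun x => hx x)
    obtain ⟨x, hx⟩ := this
    have hxne : x ≠ 0 := fun h0 => hx (by rw [h0, (TT B).map_zero])
    have hnux : 0 < nu A r x := lt_of_lt_of_le (norm_pos_iff.2 hxne) (norm_le_nu A hr hK1 hK x)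
    have hterm : 0 < nu A r (TT B x) / nu A r x := by
      refine div_pos (lt_of_lt_of_le ?_ (norm_le_nu A hr hK1 hK _)) hnux
      exact norm_pos_iff.2 hx
    have := le_NN A hr hK1 hK B x
    linarith [h ▸ this]
  · intro h
    subst h
    unfold NN
    rw [TT_zero]
    have : ∀ x : EuclideanSpace ℂ (Fin d),
        nu A r ((0 : EuclideanSpace ℂ (Fin d) →L[ℂ] EuclideanSpace ℂ (Fin d)) x) / nu A r x
          = 0 := by
      intro x
      rw [ContinuousLinearMap.zero_apply, nu_zero A hr hK1 hK, zero_div]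
    simp only [this]
    exact ciSup_const

lemma NN_smul (c : ℂ) : NN A r (c • B) = ‖c‖ * NN A r B := by
  unfold NN
  rw [Real.mul_iSup_of_nonneg (norm_nonneg c)]
  congr 1; funext x
  rw [TT_smul, ContinuousLinearMap.smul_apply, nu_smul A hr hK1 hK ((TT B) x) c, mul_div_assoc]

lemma NN_add : NN A r (B + C) ≤ NN A r B + NN A r C := by
  refine Real.iSup_le (fun x => ?_)
    (add_nonneg (NN_nonneg A hr hK1 hK B) (NN_nonneg A hr hK1 hK C))
  calc nu A r (TT (B + C) x) / nu A r x
      ≤ (nu A r (TT B x) + nu A r (TT C x)) / nu A r x := by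
        have h1 : nu A r (TT (B + C) x) ≤ nu A r (TT B x) + nu A r (TT C x) := by
          rw [TT_add, ContinuousLinearMap.add_apply]
          exact nu_add A hr hK1 hK _ _
        have h2 : 0 ≤ nu A r x := nu_nonneg A hr hK1 hK x
        gcongr
    _ = nu A r (TT B x) / nu A r x + nu A r (TT C x) / nu A r x := add_div _ _ _
    _ ≤ NN A r B + NN A r C := add_le_add (le_NN A hr hK1 hK B x) (le_NN A hr hK1 hK C x)

lemma NN_mul : NN A r (B * C) ≤ NN A r B * NN A r C := by
  refine Real.iSup_le (fun x => ?_)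
    (mul_nonneg (NN_nonneg A hr hK1 hK B) (NN_nonneg A hr hK1 hK C))
  refine div_bound A hr hK1 hK (B * C)
    (mul_nonneg (NN_nonneg A hr hK1 hK B) (NN_nonneg A hr hK1 hK C)) x ?_
  calc nu A r (TT (B * C) x) = nu A r (TT B (TT C x)) := by rw [TT_mul]
    _ ≤ NN A r B * nu A r (TT C x) := opnu A hr hK1 hK B _
    _ ≤ NN A r B * (NN A r C * nu A r x) :=
        mul_le_mul_of_nonneg_left (opnu A hr hK1 hK C x) (NN_nonneg A hr hK1 hK B)
    _ = NN A r B * NN A r C * nu A r x := by ring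

lemma NN_Ai (i : Fin k) : NN A r (A i) ≤ r := by
  refine Real.iSup_le (fun x => ?_) hr.le
  exact div_bound A hr hK1 hK (A i) hr.le x (nu_Ai A hr hK1 hK x i)

end NNSec




section Analytic

variable {k d : ℕ} (A : Fin k → Matrix (Fin d) (Fin d) ℂ)

noncomputable def FF (n : ℕ) : ℝ := ⨆ w : Fin n → Fin k, mnorm (PP A w) ^ ((n : ℝ)⁻¹)

lemma jsr_eq : jsr A = Filter.limsup (FF A) Filter.atTop := rfl

noncomputable def CC : ℝ := 1 + ∑ i : Fin k, mnorm (A i)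

lemma CC_one_le : 1 ≤ CC A :=
  le_add_of_nonneg_right (Finset.sum_nonneg fun i _ => mnorm_nonneg _)

lemma CC_nonneg : 0 ≤ CC A := le_trans zero_le_one (CC_one_le A)

lemma mnorm_le_CC (i : Fin k) : mnorm (A i) ≤ CC A := by
  have := Finset.single_le_sum (f := fun i => mnorm (A i))
    (fun i _ => mnorm_nonneg _) (Finset.mem_univ i)
  unfold CC; linarith

lemma FF_nonneg (n : ℕ) : 0 ≤ FF A n :=
  Real.iSup_nonneg fun _ => Real.rpow_nonneg (mnorm_nonneg _) _

lemma FF_le_CC (n : ℕ) : FF A n ≤ CC A := by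
  rcases Nat.eq_zero_or_pos n with h0 | hpos
  · subst h0
    refine Real.iSup_le (fun w => ?_) (CC_nonneg A)
    rw [Nat.cast_zero, _root_.inv_zero, Real.rpow_zero]
    exact CC_one_le A
  · refine Real.iSup_le (fun w => ?_) (CC_nonneg A)
    have hn' : (n : ℝ) ≠ 0 := Nat.cast_ne_zero.2 hpos.ne'
    calc mnorm (PP A w) ^ ((n : ℝ)⁻¹)
        ≤ ((CC A) ^ n) ^ ((n : ℝ)⁻¹) :=
          Real.rpow_le_rpow (mnorm_nonneg _) (mnorm_PP_le A (mnorm_le_CC A) w)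
            (by positivity)
      _ = CC A := by
          rw [← Real.rpow_natCast (CC A) n, ← Real.rpow_mul (CC_nonneg A),
            mul_inv_cancel₀ hn', Real.rpow_one]

lemma FF_bddUnder : Filter.IsBoundedUnder (· ≤ ·) Filter.atTop (FF A) :=
  Filter.isBoundedUnder_of ⟨CC A, fun n => FF_le_CC A n⟩

lemma jsr_nonneg : 0 ≤ jsr A := by
  rw [jsr_eq]
  exact Filter.le_limsup_of_frequently_le
    (Filter.Frequently.of_forall (FF_nonneg A)) (FF_bddUnder A)

lemma exists_level {r : ℝ} (hjr : jsr A < r) :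
    ∃ L : ℕ, ∀ n, L ≤ n → ∀ w : Fin n → Fin k, mnorm (PP A w) ≤ r ^ n := by
  have hev : ∀ᶠ n in Filter.atTop, FF A n < r := by
    refine Filter.eventually_lt_of_limsup_lt ?_ (FF_bddUnder A)
    rw [← jsr_eq]; exact hjr
  obtain ⟨L, hL⟩ := Filter.eventually_atTop.1 hev
  refine ⟨L, fun n hn w => ?_⟩
  rcases Nat.eq_zero_or_pos n with h0 | hpos
  · subst h0
    rw [PP_zero, pow_zero]
    exact mnorm_one_le
  · have hn' : (n : ℝ) ≠ 0 := Nat.cast_ne_zero.2 hpos.ne'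
    have h1 : mnorm (PP A w) ^ ((n : ℝ)⁻¹) ≤ FF A n := by
      unfold FF
      exact le_ciSup ((Set.finite_range
        (fun w : Fin n → Fin k => mnorm (PP A w) ^ ((n : ℝ)⁻¹))).bddAbove) w
    have h2 : mnorm (PP A w) ^ ((n : ℝ)⁻¹) < r := lt_of_le_of_lt h1 (hL n hn)
    calc mnorm (PP A w) = (mnorm (PP A w) ^ ((n : ℝ)⁻¹)) ^ n := by
          rw [← Real.rpow_natCast (mnorm (PP A w) ^ ((n : ℝ)⁻¹)) n,
            ← Real.rpow_mul (mnorm_nonneg _), inv_mul_cancel₀ hn', Real.rpow_one]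
      _ ≤ r ^ n := pow_le_pow_left₀ (Real.rpow_nonneg (mnorm_nonneg _) _) h2.le n

lemma main {r : ℝ} (hjr : jsr A < r) :
    ∃ N : Matrix (Fin d) (Fin d) ℂ → ℝ,
      (∀ B, 0 ≤ N B) ∧
      (∀ B, N B = 0 ↔ B = 0) ∧
      (∀ (c : ℂ) B, N (c • B) = ‖c‖ * N B) ∧
      (∀ B C, N (B + C) ≤ N B + N C) ∧
      (∀ B C, N (B * C) ≤ N B * N C) ∧
      (∀ i : Fin k, N (A i) ≤ r) := by
  have hr : 0 < r := lt_of_le_of_lt (jsr_nonneg A) hjr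
  obtain ⟨L, hL⟩ := exists_level A hjr
  set K : ℝ := 1 + ∑ j ∈ Finset.range L, (r⁻¹) ^ j * (CC A) ^ j with hKdef
  have hsum0 : 0 ≤ ∑ j ∈ Finset.range L, (r⁻¹) ^ j * (CC A) ^ j :=
    Finset.sum_nonneg fun j _ => mul_nonneg (by positivity) (pow_nonneg (CC_nonneg A) j)
  have hK1 : 1 ≤ K := le_add_of_nonneg_right hsum0
  have hK : ∀ (m : ℕ) (w : Fin m → Fin k), (r⁻¹) ^ m * mnorm (PP A w) ≤ K := by
    intro m w
    by_cases hm : L ≤ m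
    · calc (r⁻¹) ^ m * mnorm (PP A w) ≤ (r⁻¹) ^ m * r ^ m :=
            mul_le_mul_of_nonneg_left (hL m hm w) (by positivity)
        _ = 1 := by rw [← mul_pow, inv_mul_cancel₀ hr.ne', one_pow]
        _ ≤ K := hK1
    · push_neg at hm
      calc (r⁻¹) ^ m * mnorm (PP A w) ≤ (r⁻¹) ^ m * (CC A) ^ m :=
            mul_le_mul_of_nonneg_left (mnorm_PP_le A (mnorm_le_CC A) w) (by positivity)
        _ ≤ ∑ j ∈ Finset.range L, (r⁻¹) ^ j * (CC A) ^ j :=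
            Finset.single_le_sum
              (fun j _ => mul_nonneg (by positivity) (pow_nonneg (CC_nonneg A) j))
              (Finset.mem_range.2 hm)
        _ ≤ K := le_add_of_nonneg_left zero_le_one
  refine ⟨NN A r, fun B => NN_nonneg A hr hK1 hK B, fun B => NN_zero_iff A hr hK1 hK B,
    fun c B => NN_smul A hr hK1 hK B c, fun B C => NN_add A hr hK1 hK B C,
    fun B C => NN_mul A hr hK1 hK B C, fun i => NN_Ai A hr hK1 hK i⟩

end Analytic

end JSRAux

/-- for any ε > 0 there is a submultiplicative matrix norm with
    N(A_i) < ρ(𝒜) + ε for every i. -/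
theorem stmt1 {k d : ℕ} (A : Fin k → Matrix (Fin d) (Fin d) ℂ) (ε : ℝ) (hε : 0 < ε) :
    ∃ N : Matrix (Fin d) (Fin d) ℂ → ℝ,
      (∀ B, 0 ≤ N B) ∧
      (∀ B, N B = 0 ↔ B = 0) ∧
      (∀ (c : ℂ) B, N (c • B) = ‖c‖ * N B) ∧
      (∀ B C, N (B + C) ≤ N B + N C) ∧
      (∀ B C, N (B * C) ≤ N B * N C) ∧
      (∀ i : Fin k, N (A i) < jsr A + ε) := by
  obtain ⟨N, h1, h2, h3, h4, h5, h6⟩ := JSRAux.main A (r := jsr A + ε / 2) (by linarith)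
  exact ⟨N, h1, h2, h3, h4, h5, fun i => lt_of_le_of_lt (h6 i) (by linarith)⟩
end

section
/- Let k ≥ 2 and let f : ℕ → 𝕂 be a k-regular sequence represented by f(n) = wᵀ A_{i_0} ⋯ A_{i_s} v where (n)_k = i_s ⋯ i_0 and 𝒜_f = {A_0, ..., A_{k-1}}. Then for every ε > 0 there is a constant c = c(ε) > 0 such that |f(n)| ≤ c · n^{log_k(ρ(𝒜_f) + ε)} for all n ≥ 1. -/
open Filter Matrix

/-!
Since the joint spectral radius `ρ` is a limsup, for all large `L` every product of `L` matrices of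
the family has norm at most `(ρ + ε) ^ L`; the finitely many shorter lengths only cost a constant.
The matrix product attached to `n` has length `L`, the number of base-`k` digits of `n`, and
`k ^ (L - 1) ≤ n < k ^ L`, so `(ρ + ε) ^ L = (k ^ L) ^ logb k (ρ + ε)` is `O(n ^ logb k (ρ + ε))`.
-/

lemma mnorm_nonneg {d : ℕ} (X : Matrix (Fin d) (Fin d) ℂ) : 0 ≤ mnorm X := norm_nonneg _

lemma mnorm_one_le {d : ℕ} : mnorm (1 : Matrix (Fin d) (Fin d) ℂ) ≤ 1 := by
  rw [mnorm, _root_.map_one]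
  exact ContinuousLinearMap.norm_id_le

lemma mnorm_mul_le {d : ℕ} (X Y : Matrix (Fin d) (Fin d) ℂ) :
    mnorm (X * Y) ≤ mnorm X * mnorm Y := by
  rw [mnorm, _root_.map_mul]
  exact norm_mul_le _ _

lemma mnorm_list_prod_le_pow {d : ℕ} {M : ℝ} :
    ∀ {l : List (Matrix (Fin d) (Fin d) ℂ)}, (∀ X ∈ l, mnorm X ≤ M) → mnorm l.prod ≤ M ^ l.length
  | [], _ => by simpa using mnorm_one_le
  | X :: l, h => by
    have hX := h X List.mem_cons_self
    calc mnorm (X * l.prod) ≤ mnorm X * mnorm l.prod := mnorm_mul_le _ _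
      _ ≤ M * M ^ l.length :=
        mul_le_mul hX (mnorm_list_prod_le_pow fun Y hY => h Y (List.mem_cons_of_mem X hY))
          (mnorm_nonneg _) ((mnorm_nonneg X).trans hX)
      _ = M ^ (X :: l).length := (pow_succ' _ _).symm

lemma norm_dotProduct_mulVec_le {d : ℕ} (X : Matrix (Fin d) (Fin d) ℂ) (w v : Fin d → ℂ) :
    ‖w ⬝ᵥ (X *ᵥ v)‖ ≤ ‖WithLp.toLp 2 (star w)‖ * ‖WithLp.toLp 2 v‖ * mnorm X := by
  have hinner : w ⬝ᵥ (X *ᵥ v) = inner ℂ (WithLp.toLp 2 (star w))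
      (Matrix.toEuclideanCLM (𝕜 := ℂ) (n := Fin d) X (WithLp.toLp 2 v)) := by
    rw [Matrix.toEuclideanCLM_toLp, EuclideanSpace.inner_toLp_toLp, star_star, dotProduct_comm]
  rw [hinner]
  calc _ ≤ ‖WithLp.toLp 2 (star w)‖ *
        ‖Matrix.toEuclideanCLM (𝕜 := ℂ) (n := Fin d) X (WithLp.toLp 2 v)‖ := norm_inner_le_norm _ _
    _ ≤ ‖WithLp.toLp 2 (star w)‖ * (mnorm X * ‖WithLp.toLp 2 v‖) := by
      gcongr; exact ContinuousLinearMap.le_opNorm _ _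
    _ = _ := by ring

lemma digProd_eq_ofFn_prod {k d : ℕ} (hk : 2 ≤ k) (A : Fin k → Matrix (Fin d) (Fin d) ℂ) (n : ℕ) :
    ∃ ω : Fin (Nat.digits k n).length → Fin k,
      digProd A n = (List.ofFn fun j => A (ω j)).prod := by
  refine ⟨fun j => ⟨(Nat.digits k n)[j], Nat.digits_lt_base (by omega) (List.getElem_mem _)⟩, ?_⟩
  rw [digProd]
  congr 1
  refine List.ext_getElem (by simp) fun j h₁ h₂ => ?_
  simp only [List.getElem_map, List.getElem_ofFn]
  exact dif_pos _

section JointSpectralRadius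

variable {k d : ℕ} (A : Fin k → Matrix (Fin d) (Fin d) ℂ)

noncomputable def jsrSeq (n : ℕ) : ℝ :=
  ⨆ w : Fin n → Fin k, mnorm (List.ofFn (fun j => A (w j))).prod ^ ((n : ℝ)⁻¹)

lemma jsr_eq_limsup_jsrSeq : jsr A = limsup (jsrSeq A) atTop := rfl

lemma jsrSeq_nonneg (n : ℕ) : 0 ≤ jsrSeq A n :=
  Real.iSup_nonneg fun _ => Real.rpow_nonneg (mnorm_nonneg _) _

lemma mnorm_ofFn_prod_le_pow {n : ℕ} (ω : Fin n → Fin k) :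
    mnorm (List.ofFn fun j => A (ω j)).prod ≤ (∑ i, mnorm (A i)) ^ n := by
  simpa using mnorm_list_prod_le_pow (l := List.ofFn fun j => A (ω j)) <| by
    simpa [List.forall_mem_ofFn_iff] using fun j =>
      Finset.single_le_sum (fun i _ => mnorm_nonneg (A i)) (Finset.mem_univ (ω j))

lemma rpow_inv_mnorm_ofFn_prod_le_jsrSeq {n : ℕ} (ω : Fin n → Fin k) :
    mnorm (List.ofFn fun j => A (ω j)).prod ^ ((n : ℝ)⁻¹) ≤ jsrSeq A n :=
  le_ciSup (f := fun ω : Fin n → Fin k => mnorm (List.ofFn fun j => A (ω j)).prod ^ ((n : ℝ)⁻¹))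
    (Set.finite_range _).bddAbove ω

lemma mnorm_ofFn_prod_le_jsrSeq_pow {n : ℕ} (ω : Fin n → Fin k) :
    mnorm (List.ofFn fun j => A (ω j)).prod ≤ jsrSeq A n ^ n := by
  rcases Nat.eq_zero_or_pos n with rfl | hn
  · simpa using mnorm_one_le
  · rw [← Real.rpow_natCast, ← Real.rpow_inv_le_iff_of_pos (mnorm_nonneg _) (jsrSeq_nonneg A n)
      (by exact_mod_cast hn)]
    exact rpow_inv_mnorm_ofFn_prod_le_jsrSeq A ω

lemma jsrSeq_le_of_pos {n : ℕ} (hn : 0 < n) : jsrSeq A n ≤ ∑ i, mnorm (A i) := by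
  have hM : 0 ≤ ∑ i, mnorm (A i) := Finset.sum_nonneg fun i _ => mnorm_nonneg (A i)
  refine Real.iSup_le (fun ω => ?_) hM
  rw [Real.rpow_inv_le_iff_of_pos (mnorm_nonneg _) hM (by exact_mod_cast hn), Real.rpow_natCast]
  exact mnorm_ofFn_prod_le_pow A ω

lemma isBoundedUnder_le_jsrSeq : IsBoundedUnder (· ≤ ·) atTop (jsrSeq A) :=
  isBoundedUnder_of_eventually_le (eventually_gt_atTop 0 |>.mono fun _ => jsrSeq_le_of_pos A)

lemma jsr_nonneg : 0 ≤ jsr A := by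
  rw [jsr_eq_limsup_jsrSeq]
  exact le_limsup_of_frequently_le (.of_forall (jsrSeq_nonneg A)) (isBoundedUnder_le_jsrSeq A)

lemma exists_mnorm_ofFn_prod_le_mul_pow {r : ℝ} (hr : jsr A < r) :
    ∃ B : ℝ, 0 < B ∧ ∀ (n : ℕ) (ω : Fin n → Fin k),
      mnorm (List.ofFn fun j => A (ω j)).prod ≤ B * r ^ n := by
  have hr0 : 0 < r := (jsr_nonneg A).trans_lt hr
  rw [jsr_eq_limsup_jsrSeq] at hr
  obtain ⟨N, hN⟩ := eventually_atTop.mp <|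
    eventually_lt_of_limsup_lt hr (isBoundedUnder_le_jsrSeq A)
  set M := ∑ i, mnorm (A i)
  have hM : 0 ≤ M / r := div_nonneg (Finset.sum_nonneg fun i _ => mnorm_nonneg (A i)) hr0.le
  refine ⟨max 1 (M / r) ^ N, by positivity, fun n ω => ?_⟩
  have hB : 1 ≤ max 1 (M / r) ^ N := one_le_pow₀ (le_max_left _ _)
  rcases le_or_gt N n with hn | hn
  · calc _ ≤ jsrSeq A n ^ n := mnorm_ofFn_prod_le_jsrSeq_pow A ω
      _ ≤ r ^ n := pow_le_pow_left₀ (jsrSeq_nonneg A n) (hN n hn).le n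
      _ ≤ _ := le_mul_of_one_le_left (by positivity) hB
  · calc _ ≤ M ^ n := mnorm_ofFn_prod_le_pow A ω
      _ = (M / r) ^ n * r ^ n := by rw [← mul_pow, div_mul_cancel₀ _ hr0.ne']
      _ ≤ max 1 (M / r) ^ n * r ^ n := by gcongr; exact le_max_right _ _
      _ ≤ _ := by gcongr; exact le_max_left _ _

end JointSpectralRadius

lemma pow_le_max_one_mul_rpow_logb {k r x : ℝ} {L : ℕ} (hk : 1 < k) (hr : 0 < r) (hx : 0 < x)
    (hxL : x ≤ k ^ L) (hLx : k ^ L ≤ k * x) : r ^ L ≤ max 1 r * x ^ Real.logb k r := by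
  have hpow : r ^ L = (k ^ L) ^ Real.logb k r := by
    rw [← Real.rpow_natCast, ← Real.rpow_natCast, ← Real.rpow_mul (by positivity), mul_comm,
      Real.rpow_mul (by positivity), Real.rpow_logb (by positivity) hk.ne' hr]
  rw [hpow]
  rcases le_or_gt 0 (Real.logb k r) with he | he
  · calc (k ^ L) ^ Real.logb k r ≤ (k * x) ^ Real.logb k r := by gcongr
      _ = r * x ^ Real.logb k r := by
        rw [Real.mul_rpow (by positivity) hx.le, Real.rpow_logb (by positivity) hk.ne' hr]
      _ ≤ _ := by gcongr; exact le_max_right _ _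
  · calc (k ^ L) ^ Real.logb k r ≤ x ^ Real.logb k r := Real.rpow_le_rpow_of_nonpos hx hxL he.le
      _ ≤ _ := le_mul_of_one_le_left (by positivity) (le_max_left _ _)

/-- upper growth bound for a k-regular sequence in terms of the
    joint spectral radius of a linear representation. -/
theorem stmt2 {k d : ℕ} (hk : 2 ≤ k) (f : ℕ → ℂ)
    (A : Fin k → Matrix (Fin d) (Fin d) ℂ) (v w : Fin d → ℂ)
    (hrep : ∀ n : ℕ, f n = dotProduct w ((digProd A n).mulVec v))
    (ε : ℝ) (hε : 0 < ε) :
    ∃ c : ℝ, 0 < c ∧ ∀ n : ℕ, 1 ≤ n →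
      ‖f n‖ ≤ c * (n : ℝ) ^ Real.logb k (jsr A + ε) := by
  set r := jsr A + ε
  set C := ‖WithLp.toLp 2 (star w)‖ * ‖WithLp.toLp 2 v‖
  obtain ⟨B, hB, hprod⟩ := exists_mnorm_ofFn_prod_le_mul_pow A (lt_add_of_pos_right (jsr A) hε)
  refine ⟨(C + 1) * B * max 1 r, by positivity, fun n hn => ?_⟩
  obtain ⟨ω, hω⟩ := digProd_eq_ofFn_prod hk A n
  have hpow : r ^ (Nat.digits k n).length ≤ max 1 r * (n : ℝ) ^ Real.logb k r :=
    pow_le_max_one_mul_rpow_logb (by exact_mod_cast hk)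
      (add_pos_of_nonneg_of_pos (jsr_nonneg A) hε) (by exact_mod_cast hn)
      (by exact_mod_cast (Nat.lt_base_pow_length_digits hk).le)
      (by exact_mod_cast Nat.base_pow_length_digits_le k n hk (by omega))
  calc ‖f n‖ ≤ C * mnorm (digProd A n) := hrep n ▸ norm_dotProduct_mulVec_le _ w v
    _ ≤ (C + 1) * (B * r ^ (Nat.digits k n).length) := by
      gcongr
      · exact mnorm_nonneg _
      · linarith
      · exact hω ▸ hprod _ ω
    _ ≤ (C + 1) * (B * (max 1 r * (n : ℝ) ^ Real.logb k r)) := by gcongr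
    _ = _ := by ring
end

section
/- Let 𝒜 = {A_0, ..., A_{k-1}} be a finite set of d×d complex matrices and let m ≥ 1 and i_0, ..., i_{m-1} be indices. Then ρ(A_{i_0} ⋯ A_{i_{m-1}})^{1/m} ≤ ρ(𝒜), i.e., the m-th root of the spectral radius of any product of m matrices from 𝒜 is a lower bound for the joint spectral radius of 𝒜. -/
open Filter Matrix

/-! Repeating the word `w` `j` times gives a word of length `j * m` with product `B ^ j`, where
`B` is the product along `w`. Hence the `(j * m)`-th term of the sequence defining `jsr A` is at
least `‖B ^ j‖ ^ (1 / (j * m)) = (‖B ^ j‖ ^ (1 / j)) ^ (1 / m)`, which tends to `ρ(B) ^ (1 / m)`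
by Gelfand's formula, and the limsup along the subsequence `j * m` is at most the full limsup. -/

-- With this norm, `‖A‖` is `mnorm A` by definition.
open scoped Topology NNReal Matrix.Norms.L2Operator

theorem List.prod_ofFn_modNat {M : Type*} [Monoid M] {m : ℕ} (f : Fin m → M) (j : ℕ) :
    (List.ofFn fun i : Fin (j * m) => f i.modNat).prod = (List.ofFn f).prod ^ j := by
  rw [List.ofFn_mul, List.prod_flatten, List.map_ofFn]
  simp [Function.comp_def, Fin.modNat, Nat.mod_eq_of_lt]

theorem le_limsup_of_tendsto_of_le_comp {α γ β : Type*} [ConditionallyCompleteLinearOrder β]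
    [TopologicalSpace β] [OrderTopology β] {f : Filter α} [f.NeBot] {l : Filter γ}
    {u : γ → β} {v : α → β} {g : α → γ} {b : β}
    (hv : Tendsto v f (𝓝 b)) (hg : Tendsto g f l) (hvu : ∀ x, v x ≤ u (g x))
    (hu : IsBoundedUnder (· ≤ ·) l u) : b ≤ limsup u l :=
  calc b = limsup v f := hv.limsup_eq.symm
    _ ≤ limsup (u ∘ g) f :=
      limsup_le_limsup (.of_forall hvu) hv.isCoboundedUnder_le (hg.isBoundedUnder_comp hu)
    _ = limsup u (map g f) := limsup_comp u g f
    _ ≤ limsup u l := limsup_le_limsup_of_le hg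
        (hv.isBoundedUnder_ge.mono_ge (.of_forall hvu)).isCoboundedUnder_le hu

theorem tendsto_norm_pow_rpow_inv_toReal_spectralRadius {A : Type*} [NormedRing A]
    [NormedAlgebra ℂ A] [CompleteSpace A] (a : A) :
    Tendsto (fun n : ℕ => ‖a ^ n‖ ^ (n : ℝ)⁻¹) atTop (𝓝 (spectralRadius ℂ a).toReal) := by
  have hgelfand := spectrum.pow_norm_pow_one_div_tendsto_nhds_spectralRadius a
  have hfinite : spectralRadius ℂ a ≠ ⊤ := by
    refine ne_top_of_le_ne_top (ENNReal.ofReal_ne_top (r := ‖a‖)) (le_of_tendsto hgelfand ?_)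
    filter_upwards [eventually_ne_atTop 0] with n hn
    refine ENNReal.ofReal_le_ofReal ?_
    calc ‖a ^ n‖ ^ (1 / n : ℝ) ≤ (‖a‖ ^ n) ^ (n : ℝ)⁻¹ := by
          rw [one_div]; gcongr; exact norm_pow_le' a (Nat.pos_of_ne_zero hn)
      _ = ‖a‖ := Real.pow_rpow_inv_natCast (norm_nonneg a) hn
  refine ((ENNReal.tendsto_toReal hfinite).comp hgelfand).congr fun n => ?_
  simp [ENNReal.toReal_ofReal, Real.rpow_nonneg]

theorem norm_prod_ofFn_rpow_inv_le {R : Type*} [SeminormedRing R] {n : ℕ} (a : Fin n → R)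
    {C : ℝ≥0} (hC : 1 ≤ C) (ha : ∀ i, ‖a i‖₊ ≤ C) :
    ‖(List.ofFn a).prod‖ ^ (n : ℝ)⁻¹ ≤ C := by
  rcases eq_or_ne n 0 with rfl | hn
  · simpa using hC
  have hprod : ‖(List.ofFn a).prod‖₊ ≤ C ^ n := by
    refine (List.nnnorm_prod_le' (by simpa using hn)).trans ?_
    simpa using List.prod_le_pow_card ((List.ofFn a).map nnnorm) C (by simpa using ha)
  calc ‖(List.ofFn a).prod‖ ^ (n : ℝ)⁻¹ ≤ ((C : ℝ) ^ n) ^ (n : ℝ)⁻¹ := by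
        gcongr; exact_mod_cast hprod
    _ = C := Real.pow_rpow_inv_natCast C.2 hn

/-- the m-th root of the spectral radius of any length-m product
    is a lower bound for the joint spectral radius. -/
theorem stmt11 {k d m : ℕ} (hm : 0 < m) (A : Fin k → Matrix (Fin d) (Fin d) ℂ)
    (w : Fin m → Fin k) :
    specRad (List.ofFn (fun j => A (w j))).prod ^ ((m : ℝ)⁻¹) ≤ jsr A := by
  set B := (List.ofFn fun j => A (w j)).prod
  set C : ℝ≥0 := 1 + ∑ i, ‖A i‖₊
  -- `jsr A` is a limsup in `ℝ`, which is a junk value unless the sequence is bounded above.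
  have hbound (n : ℕ) (v : Fin n → Fin k) :
      ‖(List.ofFn fun j => A (v j)).prod‖ ^ (n : ℝ)⁻¹ ≤ C :=
    norm_prod_ofFn_rpow_inv_le _ le_self_add fun j => le_add_left <|
      Finset.single_le_sum_of_canonicallyOrdered (f := fun i => ‖A i‖₊) (Finset.mem_univ _)
  have hgelfand : Tendsto (fun j : ℕ => (‖B ^ j‖ ^ (j : ℝ)⁻¹) ^ (m : ℝ)⁻¹) atTop
      (𝓝 (specRad B ^ (m : ℝ)⁻¹)) :=
    (tendsto_norm_pow_rpow_inv_toReal_spectralRadius B).rpow_const (.inr (by positivity))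
  refine le_limsup_of_tendsto_of_le_comp hgelfand (tendsto_id.atTop_mul_const' hm) (fun j => ?_)
    (isBoundedUnder_of ⟨C, fun n => Real.iSup_le (hbound n) C.2⟩)
  have hpow : B ^ j = (List.ofFn fun i : Fin (j * m) => A (w i.modNat)).prod :=
    (List.prod_ofFn_modNat (fun i => A (w i)) j).symm
  rw [← Real.rpow_mul (norm_nonneg _), ← mul_inv, ← Nat.cast_mul, hpow]
  exact le_ciSup ⟨(C : ℝ), Set.forall_mem_range.2 (hbound (j * m))⟩ fun i => w i.modNat
end

section
/- Let k ≥ 2 and let f : ℕ → ℂ be a k-regular sequence with a linear representation f(n) = wᵀ A_{i_0} ⋯ A_{i_s} v for (n)_k = i_s ⋯ i_0. Then there exists a constant c_f > 0 such that |f(n)| = O(n^{c_f}); in particular every k-regular sequence grows at most polynomially. -/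
/-! Reading `f n = w ⬝ᵥ (A_{i_0} ⋯ A_{i_s}) v` off the `Nat.log k n + 1` base-`k` digits of `n`,
submultiplicativity of a matrix norm gives `|f n| ≤ C · B ^ (Nat.log k n)` where `B` bounds
every `‖A i‖`. Since `k ^ (Nat.log k n) ≤ n`, this is at most `C · n ^ (log_k B)`. -/

open Filter Matrix

-- Any submultiplicative norm would do; this one is bounded on `mulVec` by the sup norm.
attribute [local instance] Matrix.linftyOpNormedRing

theorem norm_list_prod_le_pow_length {R : Type*} [SeminormedRing R] {l : List R} (hl : l ≠ [])
    {B : ℝ} (hB : ∀ x ∈ l, ‖x‖ ≤ B) : ‖l.prod‖ ≤ B ^ l.length :=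
  calc ‖l.prod‖ ≤ (l.map norm).prod := List.norm_prod_le' hl
    _ ≤ (l.map fun _ => B).prod :=
        List.prod_map_le_prod_map₀ _ _ (fun _ _ => norm_nonneg _) hB
    _ = B ^ l.length := by simp

theorem norm_digProd_le {K : Type*} [NormedRing K] {d k : ℕ} (hk : 1 < k)
    (A : Fin k → Matrix (Fin d) (Fin d) K) {B : ℝ} (hA : ∀ i, ‖A i‖ ≤ B) {n : ℕ} (hn : n ≠ 0) :
    ‖digProd A n‖ ≤ B ^ (Nat.log k n + 1) := by
  rw [digProd, ← Nat.length_digits k n hk hn, ← List.length_map]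
  refine norm_list_prod_le_pow_length
    (mt List.map_eq_nil_iff.1 (Nat.digits_ne_nil_iff_ne_zero.2 hn)) fun M hM => ?_
  obtain ⟨i, hi, rfl⟩ := List.mem_map.1 hM
  rw [dif_pos (Nat.digits_lt_base hk hi)]
  exact hA _

theorem norm_dotProduct_le {ι K : Type*} [Fintype ι] [SeminormedRing K] (w x : ι → K) :
    ‖w ⬝ᵥ x‖ ≤ (∑ i, ‖w i‖) * ‖x‖ :=
  calc ‖w ⬝ᵥ x‖ ≤ ∑ i, ‖w i * x i‖ := norm_sum_le _ _
    _ ≤ ∑ i, ‖w i‖ * ‖x‖ :=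
        Finset.sum_le_sum fun i _ => (norm_mul_le _ _).trans <|
          mul_le_mul_of_nonneg_left (norm_le_pi_norm x i) (norm_nonneg _)
    _ = (∑ i, ‖w i‖) * ‖x‖ := (Finset.sum_mul _ _ _).symm

theorem pow_log_le_rpow_logb {k n : ℕ} {B : ℝ} (hk : 1 < k) (hn : n ≠ 0) (hB : 1 ≤ B) :
    B ^ Nat.log k n ≤ (n : ℝ) ^ Real.logb k B := by
  have hk' : (1 : ℝ) < k := by exact_mod_cast hk
  calc B ^ Nat.log k n = ((k : ℝ) ^ Real.logb k B) ^ Nat.log k n := by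
        rw [Real.rpow_logb (by positivity) hk'.ne' (by positivity)]
    _ = ((k : ℝ) ^ Nat.log k n) ^ Real.logb k B := Real.rpow_pow_comm (by positivity) _ _
    _ ≤ (n : ℝ) ^ Real.logb k B :=
        Real.rpow_le_rpow (by positivity) (by exact_mod_cast Nat.pow_log_le_self k hn)
          (Real.logb_nonneg hk' hB)

/-- Allouche–Shallit: every k-regular sequence grows at most
    polynomially: |f(n)| = O(n^{c_f}). -/
theorem stmt14 {k d : ℕ} (hk : 2 ≤ k) (f : ℕ → ℂ)
    (A : Fin k → Matrix (Fin d) (Fin d) ℂ) (v w : Fin d → ℂ)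
    (hrep : ∀ n : ℕ, f n = dotProduct w ((digProd A n).mulVec v)) :
    ∃ c : ℝ, 0 < c ∧ ∃ C : ℝ, 0 < C ∧
      ∀ n : ℕ, 1 ≤ n → ‖f n‖ ≤ C * (n : ℝ) ^ c := by
  have hS : 0 ≤ ∑ i, ‖A i‖ := Finset.sum_nonneg fun i _ => norm_nonneg (A i)
  set B : ℝ := 2 + ∑ i, ‖A i‖ with hB_def
  have hB : 1 < B := by linarith
  have hA : ∀ i, ‖A i‖ ≤ B := fun i => by
    linarith [Finset.single_le_sum (fun j _ => norm_nonneg (A j)) (Finset.mem_univ i)]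
  set W : ℝ := ∑ i, ‖w i‖
  refine ⟨Real.logb k B, Real.logb_pos (by exact_mod_cast hk) hB,
    W * ‖v‖ * B + 1, by positivity, fun n hn => ?_⟩
  have hn : n ≠ 0 := Nat.one_le_iff_ne_zero.1 hn
  calc ‖f n‖ ≤ W * (‖digProd A n‖ * ‖v‖) := by
        rw [hrep n]
        exact (norm_dotProduct_le _ _).trans
          (mul_le_mul_of_nonneg_left (linfty_opNorm_mulVec _ _) (by positivity))
    _ ≤ W * (B ^ (Nat.log k n + 1) * ‖v‖) := by gcongr; exact norm_digProd_le (by omega) A hA hn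
    _ = W * ‖v‖ * B * B ^ Nat.log k n := by ring
    _ ≤ W * ‖v‖ * B * (n : ℝ) ^ Real.logb k B := by
        gcongr; exact pow_log_le_rpow_logb (by omega) hn hB.le
    _ ≤ (W * ‖v‖ * B + 1) * (n : ℝ) ^ Real.logb k B := by gcongr; linarith
end
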